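/- arXiv:1102.1115 — 2 statements merged into one kernel-verified Lean document; each statement's English description precedes it below -/
import Mathlib

section
/- Let β, b, c > 0 and define h(γ) = Q(√(β·b/(c+γ))) for γ ≥ 0, where Q is the Gaussian Q-function. Then for every γ ≥ 0, the second derivative of h at γ is negative if and only if β·b/(c+γ) < 3, and positive if and only if β·b/(c+γ) > 3. -/
/-!
Put `K = β b`, `x = c + γ` and `s = K / x`. Since `Q' = -φ`, the chain rule gives
`h' = s^{3/2} e^{-s/2} / (2K√(2π))`. Differentiating once more, the factor `ds/dx = -K/x² < 0`
reverses the sign of `d/ds (s^{3/2} e^{-s/2}) = s^{1/2} e^{-s/2} (3/2 - s/2)`, so `h''` has the sign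
of `s - 3`: the threshold `3` is the maximum point of `s^{3/2} e^{-s/2}`.
-/

open MeasureTheory Real Set

/-- The Gaussian Q-function: the tail probability of the standard normal distribution. -/
noncomputable def gaussQ (t : ℝ) : ℝ :=
  ∫ u in Set.Ioi t, (1 / Real.sqrt (2 * Real.pi)) * Real.exp (-u ^ 2 / 2)

theorem hasDerivAt_integral_Ioi {E : Type*} [NormedAddCommGroup E] [NormedSpace ℝ E]
    [CompleteSpace E] {f : ℝ → E} {t : ℝ} (hf : Integrable f) (ht : ContinuousAt f t) :
    HasDerivAt (fun s => ∫ u in Ioi s, f u) (-f t) t := by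
  have hsplit : ∀ s, ∫ u in Ioi s, f u = (∫ u in Ioi t, f u) - ∫ u in t..s, f u := fun s =>
    eq_sub_of_add_eq' (intervalIntegral.integral_interval_add_Ioi hf.integrableOn hf.integrableOn)
  refine HasDerivAt.congr_of_eventuallyEq ?_ (Filter.Eventually.of_forall hsplit)
  exact (intervalIntegral.integral_hasDerivAt_right hf.intervalIntegrable
    hf.aestronglyMeasurable.stronglyMeasurableAtFilter ht).const_sub _

theorem hasDerivAt_rpow_mul_exp_neg_half (a : ℝ) {s : ℝ} (hs : 0 < s) :
    HasDerivAt (fun s => s ^ a * exp (-s / 2)) (s ^ (a - 1) * exp (-s / 2) * (a - s / 2)) s := by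
  have h := (hasDerivAt_rpow_const (p := a) (Or.inl hs.ne')).fun_mul
    ((hasDerivAt_neg' (x := s)).div_const 2).exp
  refine h.congr_deriv ?_
  rw [rpow_sub_one hs.ne']
  field_simp
  ring

theorem deriv_deriv_comp_const_add {𝕜 F : Type*} [NontriviallyNormedField 𝕜]
    [NormedAddCommGroup F] [NormedSpace 𝕜 F] (f : 𝕜 → F) (a x : 𝕜) :
    deriv (deriv fun x => f (a + x)) x = deriv (deriv f) (a + x) := by
  rw [show deriv (fun x => f (a + x)) = fun x => deriv f (a + x) from
    funext (deriv_comp_const_add f a), deriv_comp_const_add]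

theorem hasDerivAt_gaussQ (t : ℝ) :
    HasDerivAt gaussQ (-(1 / √(2 * π) * exp (-t ^ 2 / 2))) t := by
  have hint : Integrable fun u : ℝ => 1 / √(2 * π) * exp (-u ^ 2 / 2) := by
    convert (integrable_exp_neg_mul_sq (b := 1 / 2) (by norm_num)).const_mul (1 / √(2 * π))
      using 4
    ring
  exact hasDerivAt_integral_Ioi hint (by fun_prop)

theorem hasDerivAt_gaussQ_sqrt_const_div {K x : ℝ} (hK : 0 < K) (hx : 0 < x) :
    HasDerivAt (fun y => gaussQ √(K / y))
      ((K / x) ^ (3 / 2 : ℝ) * exp (-(K / x) / 2) / (2 * K * √(2 * π))) x := by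
  have hs : 0 < K / x := div_pos hK hx
  have h := (hasDerivAt_gaussQ _).comp x
    ((hasDerivAt_sqrt hs.ne').comp x ((hasDerivAt_const x K).div (hasDerivAt_id x) hx.ne'))
  refine h.congr_deriv ?_
  -- writing `K = x r²` removes every square root
  obtain ⟨r, hr, rfl⟩ : ∃ r, 0 < r ∧ K = x * r ^ 2 :=
    ⟨√(K / x), sqrt_pos.2 hs, by rw [sq_sqrt hs.le]; field_simp⟩
  have hrx : x * r ^ 2 / x = r ^ 2 := by field_simp
  have hpow : (r ^ 2) ^ (3 / 2 : ℝ) = r ^ 3 := by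
    rw [← rpow_natCast, ← rpow_mul hr.le]; norm_num
  simp only [Function.comp_apply, hrx, sqrt_sq hr.le, hpow]
  field_simp
  ring

theorem deriv_deriv_gaussQ_sqrt_const_div {K x : ℝ} (hK : 0 < K) (hx : 0 < x) :
    deriv (deriv fun y => gaussQ √(K / y)) x =
      (K / x) ^ (1 / 2 : ℝ) * exp (-(K / x) / 2) / (4 * x ^ 2 * √(2 * π)) * (K / x - 3) := by
  have hderiv : deriv (fun y => gaussQ √(K / y)) =ᶠ[nhds x]
      fun y => (K / y) ^ (3 / 2 : ℝ) * exp (-(K / y) / 2) / (2 * K * √(2 * π)) := by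
    filter_upwards [Ioi_mem_nhds hx] with y hy
    exact (hasDerivAt_gaussQ_sqrt_const_div hK hy).deriv
  have h := ((hasDerivAt_rpow_mul_exp_neg_half (3 / 2) (div_pos hK hx)).comp x
    ((hasDerivAt_const x K).div (hasDerivAt_id x) hx.ne')).div_const (2 * K * √(2 * π))
  rw [hderiv.deriv_eq]
  refine h.deriv.trans ?_
  norm_num
  field_simp
  ring

/-- For `β, b, c > 0` and `h(γ) = Q(√(β·b/(c+γ)))`, the second derivative of `h`
at any `γ ≥ 0` is negative iff `β·b/(c+γ) < 3`, and positive iff `β·b/(c+γ) > 3`. -/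
theorem gaussQ_jamming_second_deriv_sign (β b c : ℝ) (hβ : 0 < β) (hb : 0 < b)
    (hc : 0 < c) (γ : ℝ) (hγ : 0 ≤ γ) :
    (deriv (deriv fun γ => gaussQ (Real.sqrt (β * (b / (c + γ))))) γ < 0 ↔
      β * (b / (c + γ)) < 3) ∧
    (0 < deriv (deriv fun γ => gaussQ (Real.sqrt (β * (b / (c + γ))))) γ ↔
      3 < β * (b / (c + γ))) := by
  have hK : 0 < β * b := mul_pos hβ hb
  have hx : 0 < c + γ := by positivity
  simp_rw [← mul_div_assoc]
  rw [deriv_deriv_comp_const_add (fun y => gaussQ √(β * b / y)),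
    deriv_deriv_gaussQ_sqrt_const_div hK hx]
  have hP : 0 < (β * b / (c + γ)) ^ (1 / 2 : ℝ) * exp (-(β * b / (c + γ)) / 2) /
      (4 * (c + γ) ^ 2 * √(2 * π)) := by positivity
  exact ⟨(smul_neg_iff_of_pos_left hP).trans sub_neg, (mul_pos_iff_of_pos_left hP).trans sub_pos⟩
end

section
/- Let β, b, c > 0 satisfy β·b/c < 3. Then the function h(γ) = Q(√(β·b/(c+γ))) is strictly concave on [0, ∞), where Q is the Gaussian Q-function. -/
/-!
Substituting `x = c + γ`, the function is `f x = Q(√(a/x))` with `a = β·b`, and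
`f' x = √a / (2√(2π)) · exp(-a/(2x)) · x^(-3/2)`, whose derivative has the sign of
`a/2 - (3/2)·x`. So `f` is strictly concave on `x > a/3`, which contains `[c, ∞)` exactly when
`β·b/c < 3`.
-/

open Real Set MeasureTheory ProbabilityTheory

lemma gaussianPDFReal_zero_one (t : ℝ) :
    gaussianPDFReal 0 1 t = (√(2 * π))⁻¹ * exp (-t ^ 2 / 2) := by
  simp [gaussianPDFReal]

lemma gaussQ_eq_integral_gaussianPDFReal (t : ℝ) :
    gaussQ t = ∫ u in Ioi t, gaussianPDFReal 0 1 u := by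
  simp only [gaussQ, gaussianPDFReal_zero_one, one_div]

lemma hasDerivAt_gaussQ_s10 (t : ℝ) : HasDerivAt gaussQ (-gaussianPDFReal 0 1 t) t := by
  have hφ : Continuous (gaussianPDFReal 0 1) := by
    rw [funext gaussianPDFReal_zero_one]
    fun_prop
  have hQ : gaussQ = fun s => gaussQ 0 - ∫ u in (0 : ℝ)..s, gaussianPDFReal 0 1 u := by
    funext s
    simp only [gaussQ_eq_integral_gaussianPDFReal]
    rw [← intervalIntegral.integral_Ioi_sub_Ioi' (integrable_gaussianPDFReal 0 1).integrableOn
      (integrable_gaussianPDFReal 0 1).integrableOn, sub_sub_cancel]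
  rw [hQ]
  exact (hφ.integral_hasStrictDerivAt 0 t).hasDerivAt.const_sub _

lemma sqrt_div_eq_mul_rpow {a x : ℝ} (ha : 0 ≤ a) (hx : 0 ≤ x) :
    √(a / x) = √a * x ^ (-(1 / 2) : ℝ) := by
  rw [div_eq_mul_inv, sqrt_mul ha, sqrt_inv, sqrt_eq_rpow x, ← rpow_neg hx]

lemma hasDerivAt_gaussQ_sqrt_div {a x : ℝ} (ha : 0 ≤ a) (hx : 0 < x) :
    HasDerivAt (fun x => gaussQ (√(a / x)))
      (√a / (2 * √(2 * π)) * (exp (-a / (2 * x)) * x ^ (-(3 / 2) : ℝ))) x := by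
  have hinner : HasDerivAt (fun x : ℝ => √a * x ^ (-(1 / 2) : ℝ))
      (√a * (-(1 / 2) * x ^ (-(3 / 2) : ℝ))) x := by
    refine ((hasDerivAt_rpow_const (p := -(1 / 2)) (Or.inl hx.ne')).const_mul √a).congr_deriv ?_
    norm_num
  have hsq : (√a * x ^ (-(1 / 2) : ℝ)) ^ 2 = a / x := by
    rw [← sqrt_div_eq_mul_rpow ha hx.le, sq_sqrt (div_nonneg ha hx.le)]
  have hrpow : (fun x => gaussQ (√(a / x))) =ᶠ[nhds x]
      fun x => gaussQ (√a * x ^ (-(1 / 2) : ℝ)) := by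
    filter_upwards [Ioi_mem_nhds hx] with y hy
    rw [sqrt_div_eq_mul_rpow ha (le_of_lt hy)]
  refine (((hasDerivAt_gaussQ_s10 _).comp x hinner).congr_of_eventuallyEq hrpow).congr_deriv ?_
  rw [gaussianPDFReal_zero_one, hsq]
  field_simp

lemma hasDerivAt_exp_neg_div_mul_rpow (a p : ℝ) {x : ℝ} (hx : 0 < x) :
    HasDerivAt (fun x => exp (-a / (2 * x)) * x ^ p)
      (exp (-a / (2 * x)) * x ^ (p - 2) * (a / 2 + p * x)) x := by
  have hexp : HasDerivAt (fun x => -a / (2 * x)) (a / (2 * x ^ 2)) x := by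
    refine ((hasDerivAt_const x (-a)).div ((hasDerivAt_id' x).const_mul 2)
      (by positivity)).congr_deriv ?_
    field_simp
    ring
  refine (hexp.exp.mul (hasDerivAt_rpow_const (p := p) (Or.inl hx.ne'))).congr_deriv ?_
  simp only [rpow_sub hx, rpow_one, rpow_two]
  field_simp

theorem strictConcaveOn_gaussQ_sqrt_div {a : ℝ} (ha : 0 < a) :
    StrictConcaveOn ℝ (Ioi (a / 3)) (fun x => gaussQ (√(a / x))) := by
  have hpos : ∀ x ∈ Ioi (a / 3), 0 < x := fun x hx => (div_pos ha three_pos).trans hx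
  refine strictConcaveOn_of_deriv2_neg (convex_Ioi _)
    (fun x hx => (hasDerivAt_gaussQ_sqrt_div ha.le (hpos x hx)).continuousAt.continuousWithinAt)
    fun x hx => ?_
  rw [interior_Ioi] at hx
  have hx0 : 0 < x := hpos x hx
  have hderiv : deriv (fun x => gaussQ (√(a / x))) =ᶠ[nhds x]
      fun x => √a / (2 * √(2 * π)) * (exp (-a / (2 * x)) * x ^ (-(3 / 2) : ℝ)) := by
    filter_upwards [Ioi_mem_nhds hx] with y hy
    exact (hasDerivAt_gaussQ_sqrt_div ha.le (hpos y hy)).deriv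
  rw [Function.iterate_succ_apply, Function.iterate_one, hderiv.deriv_eq,
    ((hasDerivAt_exp_neg_div_mul_rpow a _ hx0).const_mul _).deriv]
  have hslope : a / 2 + -(3 / 2) * x < 0 := by rw [mem_Ioi] at hx; linarith
  exact mul_neg_of_pos_of_neg (by positivity) (mul_neg_of_pos_of_neg (by positivity) hslope)

/-- If `β, b, c > 0` and `β·b/c < 3`, then `γ ↦ Q(√(β·b/(c+γ)))` is strictly concave
on `[0, ∞)`. -/
theorem strictConcaveOn_gaussQ_jamming (β b c : ℝ) (hβ : 0 < β) (hb : 0 < b)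
    (hc : 0 < c) (h : β * (b / c) < 3) :
    StrictConcaveOn ℝ (Set.Ici (0 : ℝ))
      (fun γ => gaussQ (Real.sqrt (β * (b / (c + γ))))) := by
  have hsub : Ici (0 : ℝ) ⊆ (fun γ => c + γ) ⁻¹' Ioi (β * b / 3) := by
    intro γ hγ
    rw [mul_div_assoc', div_lt_iff₀ hc] at h
    simp only [mem_preimage, mem_Ioi, mem_Ici] at hγ ⊢
    linarith
  have hconcave := ((strictConcaveOn_gaussQ_sqrt_div (mul_pos hβ hb)).translate_right c).subset
    hsub (convex_Ici 0)
  simpa only [Function.comp_def, mul_div_assoc] using hconcave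
end
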